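/- arXiv:2105.08868 — 4 statements merged into one kernel-verified Lean document; each statement's English description precedes it below -/
import Mathlib

section
/- (Lemma 1.) Under the mth-order Markov model, for every integer k with 1 < k ≤ K − m − 1, the block of response indicators R̄ᵐₖ = (R_{max(1,k−m)},…,R_{k−1}) is conditionally independent of O_{k+m+1} given (Ȳᵐₖ, O̲^{m+1}_{k−1}) = (Y_{max(1,k−m)},…,Y_{k−1}, O_k,…,O_{k+m}). -/
open scoped Classical BigOperators

namespace MRM

/-- Observed datum at index `j`: `some (y j)` if `r j = true` (observed), otherwise `none`
(missing, i.e. the value `?`). -/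
def obs {K : ℕ} (y r : Fin K → Bool) (j : Fin K) : Option Bool :=
  if r j then some (y j) else none

/-- Probability of an event under the joint pmf `p` on outcomes and response indicators. -/
noncomputable def Pr {K : ℕ} (p : (Fin K → Bool) → (Fin K → Bool) → ℝ)
    (E : (Fin K → Bool) → (Fin K → Bool) → Prop) : ℝ :=
  ∑ y : Fin K → Bool, ∑ r : Fin K → Bool, if E y r then p y r else 0

/-- Conditional probability `P(A | C)` under `p`. -/
noncomputable def cPr {K : ℕ} (p : (Fin K → Bool) → (Fin K → Bool) → ℝ)
    (A C : (Fin K → Bool) → (Fin K → Bool) → Prop) : ℝ :=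
  Pr p (fun y r => A y r ∧ C y r) / Pr p C

/-- Event: the outcomes at the 1-based positions `lo ≤ pos ≤ hi` take the values `yv pos`.
(If `hi < lo`, or the window is out of range, this is the trivial event, matching the
convention that a vector whose lower index exceeds its upper index is the null vector.) -/
def Yeq {K : ℕ} (lo hi : ℕ) (yv : ℕ → Bool) :
    (Fin K → Bool) → (Fin K → Bool) → Prop :=
  fun y _ => ∀ j : Fin K, lo ≤ j.1 + 1 → j.1 + 1 ≤ hi → y j = yv (j.1 + 1)

/-- Event: the response indicators at positions `lo ≤ pos ≤ hi` take the values `rv pos`. -/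
def Req {K : ℕ} (lo hi : ℕ) (rv : ℕ → Bool) :
    (Fin K → Bool) → (Fin K → Bool) → Prop :=
  fun _ r => ∀ j : Fin K, lo ≤ j.1 + 1 → j.1 + 1 ≤ hi → r j = rv (j.1 + 1)

/-- Event: the observed data at positions `lo ≤ pos ≤ hi` take the values `ov pos`. -/
def Oeq {K : ℕ} (lo hi : ℕ) (ov : ℕ → Option Bool) :
    (Fin K → Bool) → (Fin K → Bool) → Prop :=
  fun y r => ∀ j : Fin K, lo ≤ j.1 + 1 → j.1 + 1 ≤ hi → obs y r j = ov (j.1 + 1)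

/-- The `m`-th order Markov model:
`p(y, r) = ∏ₖ aₖ(yₖ | ȳᵐₖ) · bₖ(rₖ | ȳᵐₖ, yₖ, o̲ᵐₖ)`, where `aₖ` and `bₖ` are strictly
positive conditional pmfs in their first argument, `aₖ` depends only on the outcomes at
1-based positions `max(1, k − m), …, k`, and `bₖ` depends only on `rₖ`, the outcomes at
positions `max(1, k − m), …, k` and the observed data at positions `k + 1, …, min(k + m, K)`.
Indices of `Fin K` are 0-based, so the 1-based paper position of `k : Fin K` is `k.1 + 1`. -/
structure Markov (K m : ℕ) where
  p : (Fin K → Bool) → (Fin K → Bool) → ℝ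
  a : Fin K → (Fin K → Bool) → ℝ
  b : Fin K → (Fin K → Bool) → (Fin K → Bool) → ℝ
  a_pos : ∀ k y, 0 < a k y
  b_pos : ∀ k y r, 0 < b k y r
  a_pmf : ∀ (k : Fin K) (y : Fin K → Bool), ∑ v : Bool, a k (Function.update y k v) = 1
  b_pmf : ∀ (k : Fin K) (y r : Fin K → Bool), ∑ v : Bool, b k y (Function.update r k v) = 1
  a_local : ∀ (k : Fin K) (y y' : Fin K → Bool),
    (∀ j : Fin K, k.1 + 1 - m ≤ j.1 + 1 → j.1 ≤ k.1 → y j = y' j) → a k y = a k y'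
  b_local : ∀ (k : Fin K) (y r y' r' : Fin K → Bool), r k = r' k →
    (∀ j : Fin K, k.1 + 1 - m ≤ j.1 + 1 → j.1 ≤ k.1 → y j = y' j) →
    (∀ j : Fin K, k.1 < j.1 → j.1 + 1 ≤ k.1 + 1 + m → obs y r j = obs y' r' j) →
    b k y r = b k y' r'
  factor : ∀ y r, p y r = ∏ k : Fin K, a k y * b k y r
  sum_one : ∑ y : Fin K → Bool, ∑ r : Fin K → Bool, p y r = 1

/-- Real value of a binary outcome. -/
def yVal (v : Bool) : ℝ := if v then 1 else 0

/-- `cₖ(ȳᵐₖ, o̲ᵐₖ; α) = E[exp(α Yₖ) | Rₖ = 1, Ȳᵐₖ = ȳᵐₖ, O̲ᵐₖ = o̲ᵐₖ]` (`k` is 1-based). -/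
noncomputable def cfun {K : ℕ} (p : (Fin K → Bool) → (Fin K → Bool) → ℝ) (m : ℕ) (α : ℝ)
    (k : ℕ) (yv : ℕ → Bool) (ov : ℕ → Option Bool) : ℝ :=
  ∑ v : Bool, Real.exp (α * yVal v) *
    cPr p (Yeq k k (fun _ => v))
      (fun y r => Req k k (fun _ => true) y r ∧ Yeq (k - m) (k - 1) yv y r ∧
        Oeq (k + 1) (k + m) ov y r)

/-- The exponential tilting restriction with sensitivity parameters `α k` (`k` is 1-based):
`f(Yₖ | Rₖ = 0, Ȳᵐₖ, O̲ᵐₖ) = f(Yₖ | Rₖ = 1, Ȳᵐₖ, O̲ᵐₖ) · exp(αₖ Yₖ) / cₖ(Ȳᵐₖ, O̲ᵐₖ; αₖ)`. -/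
def Tilt {K : ℕ} (p : (Fin K → Bool) → (Fin K → Bool) → ℝ) (m : ℕ) (α : ℕ → ℝ) : Prop :=
  ∀ (k : ℕ), 1 ≤ k → k ≤ K → ∀ (yv : ℕ → Bool) (ov : ℕ → Option Bool),
    cPr p (Yeq k k yv)
      (fun y r => Req k k (fun _ => false) y r ∧ Yeq (k - m) (k - 1) yv y r ∧
        Oeq (k + 1) (k + m) ov y r)
    = cPr p (Yeq k k yv)
        (fun y r => Req k k (fun _ => true) y r ∧ Yeq (k - m) (k - 1) yv y r ∧
          Oeq (k + 1) (k + m) ov y r)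
      * Real.exp (α k * yVal (yv k)) / cfun p m (α k) k yv ov

/-! Two configurations `(y, r)` and `(y', r')` that agree on the separator
`(Ȳᵐₖ, O_k, …, O_{k+m})` may exchange their tails from position `k` on without changing
`p(y, r) p(y', r')`: a Markov factor at a position before `k` looks at most `m` steps ahead, so
it sees observed data only up to `O_{k+m}`, and a factor at a position from `k` on looks at most
`m` steps back, so it sees outcomes only from `Y_{k-m}` on. With `A = {R̄ᵐₖ = r̄}`,
`B = {O_{k+m+1} = o}` and `C` the conditioning event, the tail swap is an involution on pairs of
configurations carrying `(A ∩ B ∩ C) × C` onto `(A ∩ C) × (B ∩ C)`, so summing gives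
`P(A ∩ B ∩ C) P(C) = P(A ∩ C) P(B ∩ C)`, the product form of conditional independence. -/

/-- Positions are 1-based: `glue k f g` takes the positions `< k` from `f` and the others
from `g`. -/
def glue {α : Type*} {K : ℕ} (k : ℕ) (f g : Fin K → α) : Fin K → α :=
  fun j => if j.1 + 1 < k then f j else g j

section Glue

variable {α : Type*} {K : ℕ} (k : ℕ)

lemma glue_of_lt {f g : Fin K → α} {j : Fin K} (h : j.1 + 1 < k) : glue k f g j = f j :=
  if_pos h

lemma glue_of_not_lt {f g : Fin K → α} {j : Fin K} (h : ¬ j.1 + 1 < k) : glue k f g j = g j :=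
  if_neg h

lemma glue_glue_glue (f g : Fin K → α) : glue k (glue k f g) (glue k g f) = f := by
  funext j
  by_cases h : j.1 + 1 < k <;> simp [glue, h]

lemma obs_glue (y y' r r' : Fin K → Bool) (j : Fin K) :
    obs (glue k y y') (glue k r r') j = glue k (obs y r) (obs y' r') j := by
  by_cases h : j.1 + 1 < k <;> simp [glue, h, obs]

variable {k}

lemma forall_window_glue_of_le_sub_one {lo hi : ℕ} (h : hi ≤ k - 1) (P : Fin K → α → Prop)
    (f g : Fin K → α) :
    (∀ j : Fin K, lo ≤ j.1 + 1 → j.1 + 1 ≤ hi → P j (glue k f g j)) ↔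
      ∀ j : Fin K, lo ≤ j.1 + 1 → j.1 + 1 ≤ hi → P j (f j) :=
  forall_congr' fun _ => imp_congr_right fun _ => imp_congr_right fun _ => by
    rw [glue_of_lt k (by omega)]

lemma forall_window_glue_of_le {lo hi : ℕ} (h : k ≤ lo) (P : Fin K → α → Prop)
    (f g : Fin K → α) :
    (∀ j : Fin K, lo ≤ j.1 + 1 → j.1 + 1 ≤ hi → P j (glue k f g j)) ↔
      ∀ j : Fin K, lo ≤ j.1 + 1 → j.1 + 1 ≤ hi → P j (g j) :=
  forall_congr' fun _ => imp_congr_right fun _ => imp_congr_right fun _ => by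
    rw [glue_of_not_lt k (by omega)]

lemma Req_glue_iff {lo hi : ℕ} (h : hi ≤ k - 1) (rv : ℕ → Bool) (y y' r r' : Fin K → Bool) :
    Req lo hi rv (glue k y y') (glue k r r') ↔ Req lo hi rv y r :=
  forall_window_glue_of_le_sub_one h (fun j v => v = rv (j.1 + 1)) r r'

lemma Yeq_glue_iff {lo hi : ℕ} (h : hi ≤ k - 1) (yv : ℕ → Bool) (y y' r r' : Fin K → Bool) :
    Yeq lo hi yv (glue k y y') (glue k r r') ↔ Yeq lo hi yv y r :=
  forall_window_glue_of_le_sub_one h (fun j v => v = yv (j.1 + 1)) y y'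

lemma Oeq_glue_iff {lo hi : ℕ} (h : k ≤ lo) (ov : ℕ → Option Bool) (y y' r r' : Fin K → Bool) :
    Oeq lo hi ov (glue k y y') (glue k r r') ↔ Oeq lo hi ov y' r' := by
  simp only [Oeq, obs_glue]
  exact forall_window_glue_of_le h (fun j v => v = ov (j.1 + 1)) (obs y r) (obs y' r')

end Glue

namespace Markov

variable {K m : ℕ} (M : Markov K m) {k : ℕ} {y r y' r' : Fin K → Bool}

lemma factor_glue_of_lt
    (ho : ∀ j : Fin K, k ≤ j.1 + 1 → j.1 + 1 ≤ k + m → obs y r j = obs y' r' j)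
    {j : Fin K} (hj : j.1 + 1 < k) :
    M.a j (glue k y y') * M.b j (glue k y y') (glue k r r') = M.a j y * M.b j y r := by
  have hwin : ∀ i : Fin K, j.1 + 1 - m ≤ i.1 + 1 → i.1 ≤ j.1 → glue k y y' i = y i :=
    fun _ _ _ => glue_of_lt k (by omega)
  have hobs : ∀ i : Fin K, j.1 < i.1 → i.1 + 1 ≤ j.1 + 1 + m →
      obs (glue k y y') (glue k r r') i = obs y r i := by
    intro i _ _
    rw [obs_glue]
    by_cases hik : i.1 + 1 < k
    · exact glue_of_lt k hik
    · rw [glue_of_not_lt k hik]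
      exact (ho i (by omega) (by omega)).symm
  rw [M.a_local j _ _ hwin, M.b_local j _ _ _ _ (glue_of_lt k hj) hwin hobs]

lemma factor_glue_of_not_lt
    (hy : ∀ j : Fin K, k - m ≤ j.1 + 1 → j.1 + 1 ≤ k - 1 → y j = y' j)
    {j : Fin K} (hj : ¬ j.1 + 1 < k) :
    M.a j (glue k y y') * M.b j (glue k y y') (glue k r r') = M.a j y' * M.b j y' r' := by
  have hwin : ∀ i : Fin K, j.1 + 1 - m ≤ i.1 + 1 → i.1 ≤ j.1 → glue k y y' i = y' i := by
    intro i _ _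
    by_cases hik : i.1 + 1 < k
    · rw [glue_of_lt k hik]
      exact hy i (by omega) (by omega)
    · exact glue_of_not_lt k hik
  have hobs : ∀ i : Fin K, j.1 < i.1 → i.1 + 1 ≤ j.1 + 1 + m →
      obs (glue k y y') (glue k r r') i = obs y' r' i :=
    fun i _ _ => by rw [obs_glue, glue_of_not_lt k (by omega)]
  rw [M.a_local j _ _ hwin, M.b_local j _ _ _ _ (glue_of_not_lt k hj) hwin hobs]

theorem p_glue_mul_p_glue
    (hy : ∀ j : Fin K, k - m ≤ j.1 + 1 → j.1 + 1 ≤ k - 1 → y j = y' j)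
    (ho : ∀ j : Fin K, k ≤ j.1 + 1 → j.1 + 1 ≤ k + m → obs y r j = obs y' r' j) :
    M.p (glue k y y') (glue k r r') * M.p (glue k y' y) (glue k r' r) = M.p y r * M.p y' r' := by
  simp only [M.factor, ← Finset.prod_mul_distrib]
  refine Finset.prod_congr rfl fun j _ => ?_
  by_cases hj : j.1 + 1 < k
  · rw [M.factor_glue_of_lt ho hj, M.factor_glue_of_lt (fun i h h' => (ho i h h').symm) hj]
  · rw [M.factor_glue_of_not_lt hy hj,
      M.factor_glue_of_not_lt (fun i h h' => (hy i h h').symm) hj, mul_comm]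

end Markov

abbrev Config (K : ℕ) := (Fin K → Bool) × (Fin K → Bool)

section Pairs

variable {K : ℕ} (p : (Fin K → Bool) → (Fin K → Bool) → ℝ)

lemma Pr_eq_sum_config (E : (Fin K → Bool) → (Fin K → Bool) → Prop) :
    Pr p E = ∑ ω : Config K, if E ω.1 ω.2 then p ω.1 ω.2 else 0 :=
  (Fintype.sum_prod_type' fun y r => if E y r then p y r else 0).symm

lemma Pr_mul_Pr (E F : (Fin K → Bool) → (Fin K → Bool) → Prop) :
    Pr p E * Pr p F = ∑ x : Config K × Config K,
      if E x.1.1 x.1.2 ∧ F x.2.1 x.2.2 then p x.1.1 x.1.2 * p x.2.1 x.2.2 else 0 := by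
  simp only [Pr_eq_sum_config, Finset.sum_mul_sum, ite_zero_mul_ite_zero]
  exact (Fintype.sum_prod_type' fun ω ω' : Config K =>
    if E ω.1 ω.2 ∧ F ω'.1 ω'.2 then p ω.1 ω.2 * p ω'.1 ω'.2 else 0).symm

lemma Pr_mul_Pr_eq_of_involutive (E F G H : (Fin K → Bool) → (Fin K → Bool) → Prop)
    (σ : Config K × Config K → Config K × Config K) (hσ : Function.Involutive σ)
    (hev : ∀ x, G (σ x).1.1 (σ x).1.2 ∧ H (σ x).2.1 (σ x).2.2 ↔ E x.1.1 x.1.2 ∧ F x.2.1 x.2.2)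
    (hp : ∀ x, E x.1.1 x.1.2 → F x.2.1 x.2.2 →
      p (σ x).1.1 (σ x).1.2 * p (σ x).2.1 (σ x).2.2 = p x.1.1 x.1.2 * p x.2.1 x.2.2) :
    Pr p E * Pr p F = Pr p G * Pr p H := by
  rw [Pr_mul_Pr, Pr_mul_Pr]
  refine Fintype.sum_equiv hσ.toPerm _ _ fun x => ?_
  simp only [Function.Involutive.coe_toPerm, hev]
  split_ifs with h
  · exact (hp x h.1 h.2).symm
  · rfl

lemma cPr_and_eq_mul_of_mul_eq (A B C : (Fin K → Bool) → (Fin K → Bool) → Prop)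
    (h : Pr p (fun y r => (A y r ∧ B y r) ∧ C y r) * Pr p C
      = Pr p (fun y r => A y r ∧ C y r) * Pr p (fun y r => B y r ∧ C y r)) :
    cPr p (fun y r => A y r ∧ B y r) C = cPr p A C * cPr p B C := by
  rcases eq_or_ne (Pr p C) 0 with hC | hC
  · simp [cPr, hC]
  · rw [cPr, cPr, cPr, div_mul_div_comm, ← h, mul_div_mul_right _ _ hC]

end Pairs

theorem statement1_general (K m : ℕ) (M : Markov K m) (k : ℕ)
    (rv : ℕ → Bool) (ovB : ℕ → Option Bool) (yv : ℕ → Bool) (ovC : ℕ → Option Bool) :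
    cPr M.p (fun y r => Req (k - m) (k - 1) rv y r ∧ Oeq (k + m + 1) (k + m + 1) ovB y r)
        (fun y r => Yeq (k - m) (k - 1) yv y r ∧ Oeq k (k + m) ovC y r)
      = cPr M.p (Req (k - m) (k - 1) rv)
          (fun y r => Yeq (k - m) (k - 1) yv y r ∧ Oeq k (k + m) ovC y r)
        * cPr M.p (Oeq (k + m + 1) (k + m + 1) ovB)
            (fun y r => Yeq (k - m) (k - 1) yv y r ∧ Oeq k (k + m) ovC y r) := by
  apply cPr_and_eq_mul_of_mul_eq
  refine Pr_mul_Pr_eq_of_involutive M.p _ _ _ _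
    (fun x => ((glue k x.1.1 x.2.1, glue k x.1.2 x.2.2), (glue k x.2.1 x.1.1, glue k x.2.2 x.1.2)))
    ?involutive ?events ?mass
  case involutive =>
    rintro ⟨⟨y, r⟩, y', r'⟩
    simp only [glue_glue_glue]
  case events =>
    rintro ⟨⟨y, r⟩, y', r'⟩
    simp only [Req_glue_iff le_rfl, Yeq_glue_iff le_rfl, Oeq_glue_iff le_rfl,
      Oeq_glue_iff (by omega : k ≤ k + m + 1)]
    tauto
  case mass =>
    rintro ⟨⟨y, r⟩, y', r'⟩ ⟨-, hY, hO⟩ ⟨hY', hO'⟩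
    exact M.p_glue_mul_p_glue (fun j h h' => (hY j h h').trans (hY' j h h').symm)
      (fun j h h' => (hO j h h').trans (hO' j h h').symm)

/-- **Lemma 1.** Under the `m`th-order Markov model, for every integer `k` with
`1 < k ≤ K − m − 1`, the block `R̄ᵐₖ = (R_{max(1,k−m)}, …, R_{k−1})` is conditionally
independent of `O_{k+m+1}` given `(Ȳᵐₖ, O̲^{m+1}_{k−1}) = (Y_{max(1,k−m)}, …, Y_{k−1},
O_k, …, O_{k+m})`. -/
theorem statement1 (K m : ℕ) (hm : 1 ≤ m) (hKm : 2 * m + 1 < K) (M : Markov K m)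
    (k : ℕ) (hk1 : 1 < k) (hk2 : k ≤ K - m - 1)
    (rv : ℕ → Bool) (ovB : ℕ → Option Bool) (yv : ℕ → Bool) (ovC : ℕ → Option Bool)
    (hC : 0 < Pr M.p (fun y r => Yeq (k - m) (k - 1) yv y r ∧ Oeq k (k + m) ovC y r)) :
    cPr M.p (fun y r => Req (k - m) (k - 1) rv y r ∧ Oeq (k + m + 1) (k + m + 1) ovB y r)
        (fun y r => Yeq (k - m) (k - 1) yv y r ∧ Oeq k (k + m) ovC y r)
      = cPr M.p (Req (k - m) (k - 1) rv)
          (fun y r => Yeq (k - m) (k - 1) yv y r ∧ Oeq k (k + m) ovC y r)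
        * cPr M.p (Oeq (k + m + 1) (k + m + 1) ovB)
            (fun y r => Yeq (k - m) (k - 1) yv y r ∧ Oeq k (k + m) ovC y r) :=
  statement1_general K m M k rv ovB yv ovC

end MRM
end

section
/- (Lemma 3, recursive identity.) Under the mth-order Markov model together with the exponential tilting restriction, for every k = 1,…,K and all values of the variables, f(Ȳ^{m+1}_{k+1}, O̲^{m+1}_{k}) = [ f(O_{k+m+1} | Rₖ = 1, Ȳ^{m+1}_{k+1}, O̲ᵐₖ) ]^{1(k ≤ K−m−1)} · f(Yₖ | Rₖ = 1, Ȳᵐₖ, O̲ᵐₖ) · { P(Rₖ = 1 | Ȳᵐₖ, O̲ᵐₖ) + P(Rₖ = 0 | Ȳᵐₖ, O̲ᵐₖ) · exp(αₖ Yₖ) / cₖ(Ȳᵐₖ, O̲ᵐₖ; αₖ) } · f(Ȳᵐₖ, O̲ᵐₖ), where 1(·) is the indicator function (the bracketed factor is omitted when k > K−m−1), Ȳ^{m+1}_{k+1} = (Y_{max(1,k−m)},…,Yₖ), O̲^{m+1}_k = (O_{k+1},…,O_{min(k+m+1,K)}), Ȳᵐₖ = (Y_{max(1,k−m)},…,Y_{k−1})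 and O̲ᵐₖ = (O_{k+1},…,O_{min(k+m,K)}). -/
/-!
Write `q_ε = P(O_{k+m+1}, Rₖ = ε, Ȳ^{m+1}_{k+1}, O̲ᵐₖ)` and `n_ε = P(Rₖ = ε, Ȳ^{m+1}_{k+1}, O̲ᵐₖ)`.
Splitting on `Rₖ`, the left side is `q₁ + q₀`, while the right side simplifies to
`q₁ + q₁ · P(Rₖ = 0, Ȳᵐₖ, O̲ᵐₖ) exp(αₖ Yₖ) / (P(Rₖ = 1, Ȳᵐₖ, O̲ᵐₖ) cₖ)`, which by the tilting
restriction is `q₁ + q₁ n₀ / n₁`. So everything reduces to `q₁ n₀ = q₀ n₁`: `O_{k+m+1}` and `Rₖ`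
are conditionally independent given `(Ȳ^{m+1}_{k+1}, O̲ᵐₖ)`. This is the Markov property. By the
factorisation of `p`, exchanging the parts up to position `k` of two trajectories that agree on
that window preserves the product of their probabilities, and this involution on pairs of
trajectories carries the pairs counted by `q₁ n₀` onto those counted by `q₀ n₁`.
-/

open scoped Classical BigOperators

namespace MRM

abbrev Event (K : ℕ) := (Fin K → Bool) → (Fin K → Bool) → Prop

section Probability

variable {K : ℕ} (p : (Fin K → Bool) → (Fin K → Bool) → ℝ)

lemma Pr_congr {A B : Event K} (h : ∀ y r, A y r ↔ B y r) : Pr p A = Pr p B := by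
  simp only [Pr, h]

lemma Pr_eq_sum_prod (E : Event K) :
    Pr p E = ∑ ω : (Fin K → Bool) × (Fin K → Bool), if E ω.1 ω.2 then p ω.1 ω.2 else 0 := by
  rw [Fintype.sum_prod_type]
  rfl

lemma Pr_eq_Pr_and_add_Pr_and_not (A B : Event K) :
    Pr p A = Pr p (fun y r => A y r ∧ B y r) + Pr p (fun y r => A y r ∧ ¬ B y r) := by
  simp only [Pr, ← Finset.sum_add_distrib]
  refine Finset.sum_congr rfl fun y _ => Finset.sum_congr rfl fun r _ => ?_
  by_cases hA : A y r <;> by_cases hB : B y r <;> simp [hA, hB]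

variable {p}

lemma Pr_pos (hp : ∀ y r, 0 < p y r) {E : Event K} (h : ∃ y r, E y r) : 0 < Pr p E := by
  obtain ⟨y, r, hE⟩ := h
  have hnonneg : ∀ y r, 0 ≤ if E y r then p y r else 0 := fun y r => by
    split_ifs
    exacts [(hp y r).le, le_rfl]
  refine Finset.sum_pos' (fun y _ => Finset.sum_nonneg fun r _ => hnonneg y r)
    ⟨y, Finset.mem_univ _, Finset.sum_pos' (fun r _ => hnonneg y r) ⟨r, Finset.mem_univ _, ?_⟩⟩
  simp [hE, hp y r]

end Probability

lemma sum_ite_mul_sum_ite_eq_of_involutive {α : Type*} [Fintype α] (f : α → ℝ)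
    {A B A' B' : α → Prop} (σ : α × α → α × α) (hσ : Function.Involutive σ)
    (hAB : ∀ x, A' (σ x).1 ∧ B' (σ x).2 ↔ A x.1 ∧ B x.2)
    (hf : ∀ x, A x.1 ∧ B x.2 → f (σ x).1 * f (σ x).2 = f x.1 * f x.2) :
    (∑ a, if A a then f a else 0) * (∑ b, if B b then f b else 0)
      = (∑ a, if A' a then f a else 0) * (∑ b, if B' b then f b else 0) := by
  have hprod : ∀ A B : α → Prop, (∑ a, if A a then f a else 0) * (∑ b, if B b then f b else 0)
      = ∑ x : α × α, if A x.1 ∧ B x.2 then f x.1 * f x.2 else 0 := by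
    intro A B
    rw [Finset.sum_mul_sum, ← Finset.univ_product_univ, Finset.sum_product]
    simp only [ite_zero_mul_ite_zero]
  rw [hprod, hprod]
  conv_rhs => rw [← Equiv.sum_comp hσ.toPerm]
  refine Finset.sum_congr rfl fun x _ => ?_
  simp only [Function.Involutive.coe_toPerm, hAB]
  split_ifs with h
  · exact (hf x h).symm
  · rfl

section Splice

variable {K : ℕ}

def splice (k : ℕ) (u v : Fin K → Bool) : Fin K → Bool :=
  fun j => if j.1 + 1 ≤ k then u j else v j

lemma splice_of_le {k : ℕ} {u v : Fin K → Bool} {j : Fin K} (h : j.1 + 1 ≤ k) :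
    splice k u v j = u j := if_pos h

lemma splice_of_lt {k : ℕ} {u v : Fin K → Bool} {j : Fin K} (h : k < j.1 + 1) :
    splice k u v j = v j := if_neg (Nat.not_le.2 h)

lemma splice_splice_splice (k : ℕ) (u v : Fin K → Bool) :
    splice k (splice k u v) (splice k v u) = u := by
  ext j
  by_cases h : j.1 + 1 ≤ k <;> simp [splice, h]

lemma obs_splice (k : ℕ) (y r y' r' : Fin K → Bool) (j : Fin K) :
    obs (splice k y y') (splice k r r') j = if j.1 + 1 ≤ k then obs y r j else obs y' r' j := by
  by_cases h : j.1 + 1 ≤ k <;> simp [obs, splice, h]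

def DependsOnlyOn (S : Fin K → Prop) (E : Event K) : Prop :=
  ∀ y r y' r', (∀ j, S j → y j = y' j ∧ r j = r' j) → (E y r ↔ E y' r')

lemma DependsOnlyOn.mono {S T : Fin K → Prop} {E : Event K} (h : DependsOnlyOn S E)
    (hST : ∀ j, S j → T j) : DependsOnlyOn T E :=
  fun y r y' r' hyr => h y r y' r' fun j hj => hyr j (hST j hj)

lemma dependsOnlyOn_Yeq (lo hi : ℕ) (yv : ℕ → Bool) :
    DependsOnlyOn (fun j : Fin K => lo ≤ j.1 + 1 ∧ j.1 + 1 ≤ hi) (Yeq lo hi yv) := by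
  intro y r y' r' hyr
  refine forall_congr' fun j => imp_congr_right fun h1 => imp_congr_right fun h2 => ?_
  rw [(hyr j ⟨h1, h2⟩).1]

lemma dependsOnlyOn_Req (lo hi : ℕ) (rv : ℕ → Bool) :
    DependsOnlyOn (fun j : Fin K => lo ≤ j.1 + 1 ∧ j.1 + 1 ≤ hi) (Req lo hi rv) := by
  intro y r y' r' hyr
  refine forall_congr' fun j => imp_congr_right fun h1 => imp_congr_right fun h2 => ?_
  rw [(hyr j ⟨h1, h2⟩).2]

lemma dependsOnlyOn_Oeq (lo hi : ℕ) (ov : ℕ → Option Bool) :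
    DependsOnlyOn (fun j : Fin K => lo ≤ j.1 + 1 ∧ j.1 + 1 ≤ hi) (Oeq lo hi ov) := by
  intro y r y' r' hyr
  refine forall_congr' fun j => imp_congr_right fun h1 => imp_congr_right fun h2 => ?_
  rw [obs, obs, (hyr j ⟨h1, h2⟩).1, (hyr j ⟨h1, h2⟩).2]

lemma DependsOnlyOn.splice_iff_left {k : ℕ} {E : Event K}
    (h : DependsOnlyOn (fun j : Fin K => j.1 + 1 ≤ k) E) (y r y' r' : Fin K → Bool) :
    E (splice k y y') (splice k r r') ↔ E y r :=
  h _ _ _ _ fun _ hj => ⟨splice_of_le hj, splice_of_le hj⟩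

lemma DependsOnlyOn.splice_iff_right {k : ℕ} {E : Event K}
    (h : DependsOnlyOn (fun j : Fin K => k < j.1 + 1) E) (y r y' r' : Fin K → Bool) :
    E (splice k y y') (splice k r r') ↔ E y' r' :=
  h _ _ _ _ fun _ hj => ⟨splice_of_lt hj, splice_of_lt hj⟩

end Splice

namespace Markov

variable {K m : ℕ} (M : Markov K m)

lemma p_pos (y r : Fin K → Bool) : 0 < M.p y r := by
  rw [M.factor]
  exact Finset.prod_pos fun j _ => mul_pos (M.a_pos j y) (M.b_pos j y r)

variable {k : ℕ} {y r y' r' : Fin K → Bool}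

lemma factor_splice_of_le
    (hO : ∀ j : Fin K, k < j.1 + 1 → j.1 + 1 ≤ k + m → obs y r j = obs y' r' j)
    {j : Fin K} (hj : j.1 + 1 ≤ k) :
    M.a j (splice k y' y) * M.b j (splice k y' y) (splice k r' r) = M.a j y' * M.b j y' r' := by
  have hy : ∀ i : Fin K, j.1 + 1 - m ≤ i.1 + 1 → i.1 ≤ j.1 → splice k y' y i = y' i :=
    fun i _ hi => splice_of_le (by omega)
  rw [M.a_local j _ _ hy, M.b_local j _ _ _ _ (splice_of_le hj) hy]
  intro i hji hi
  rw [obs_splice]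
  split_ifs with hik
  · rfl
  · exact hO i (by omega) (by omega)

lemma factor_splice_of_lt
    (hY : ∀ j : Fin K, k < j.1 + 1 + m → j.1 + 1 ≤ k → y j = y' j)
    {j : Fin K} (hj : k < j.1 + 1) :
    M.a j (splice k y' y) * M.b j (splice k y' y) (splice k r' r) = M.a j y * M.b j y r := by
  have hy : ∀ i : Fin K, j.1 + 1 - m ≤ i.1 + 1 → i.1 ≤ j.1 → splice k y' y i = y i := by
    intro i hi hij
    by_cases hik : i.1 + 1 ≤ k
    · rw [splice_of_le hik, hY i (by omega) hik]
    · exact splice_of_lt (by omega)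
  rw [M.a_local j _ _ hy, M.b_local j _ _ _ _ (splice_of_lt hj) hy]
  intro i hji _
  rw [obs_splice, if_neg (by omega)]

lemma p_splice_mul_p_splice
    (hY : ∀ j : Fin K, k < j.1 + 1 + m → j.1 + 1 ≤ k → y j = y' j)
    (hO : ∀ j : Fin K, k < j.1 + 1 → j.1 + 1 ≤ k + m → obs y r j = obs y' r' j) :
    M.p (splice k y' y) (splice k r' r) * M.p (splice k y y') (splice k r r')
      = M.p y r * M.p y' r' := by
  have hY' : ∀ j : Fin K, k < j.1 + 1 + m → j.1 + 1 ≤ k → y' j = y j :=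
    fun j h1 h2 => (hY j h1 h2).symm
  have hO' : ∀ j : Fin K, k < j.1 + 1 → j.1 + 1 ≤ k + m → obs y' r' j = obs y r j :=
    fun j h1 h2 => (hO j h1 h2).symm
  simp only [M.factor, ← Finset.prod_mul_distrib]
  refine Finset.prod_congr rfl fun j _ => ?_
  by_cases hj : j.1 + 1 ≤ k
  · rw [M.factor_splice_of_le hO hj, M.factor_splice_of_le hO' hj, mul_comm]
  · rw [M.factor_splice_of_lt hY (by omega), M.factor_splice_of_lt hY' (by omega)]

end Markov

/-- Conditional independence of the future and the past of position `k` given the window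
`(Ȳ^{m+1}_{k+1}, O̲ᵐₖ)`, in cross-multiplied form. -/
theorem Markov.Pr_future_mul_Pr_past_comm {K m : ℕ} (M : Markov K m) (k : ℕ) (yv : ℕ → Bool)
    (ov : ℕ → Option Bool) {F P P' : Event K}
    (hF : DependsOnlyOn (fun j : Fin K => k < j.1 + 1) F)
    (hP : DependsOnlyOn (fun j : Fin K => j.1 + 1 ≤ k) P)
    (hP' : DependsOnlyOn (fun j : Fin K => j.1 + 1 ≤ k) P') :
    Pr M.p (fun y r => F y r ∧ P y r ∧ Yeq (k - m) k yv y r ∧ Oeq (k + 1) (k + m) ov y r)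
        * Pr M.p (fun y r => P' y r ∧ Yeq (k - m) k yv y r ∧ Oeq (k + 1) (k + m) ov y r)
      = Pr M.p (fun y r => F y r ∧ P' y r ∧ Yeq (k - m) k yv y r ∧ Oeq (k + 1) (k + m) ov y r)
        * Pr M.p (fun y r => P y r ∧ Yeq (k - m) k yv y r ∧ Oeq (k + 1) (k + m) ov y r) := by
  have hY : DependsOnlyOn (fun j : Fin K => j.1 + 1 ≤ k) (Yeq (k - m) k yv) :=
    (dependsOnlyOn_Yeq _ _ _).mono fun _ hj => hj.2
  have hO : DependsOnlyOn (fun j : Fin K => k < j.1 + 1) (Oeq (k + 1) (k + m) ov) :=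
    (dependsOnlyOn_Oeq _ _ _).mono fun _ hj => hj.1
  simp only [Pr_eq_sum_prod]
  refine sum_ite_mul_sum_ite_eq_of_involutive (fun ω => M.p ω.1 ω.2)
    (fun x => ((splice k x.2.1 x.1.1, splice k x.2.2 x.1.2),
      (splice k x.1.1 x.2.1, splice k x.1.2 x.2.2)))
    (fun x => by simp only [splice_splice_splice]) (fun x => ?_) ?_
  · simp only [hF.splice_iff_right, hP.splice_iff_left, hP'.splice_iff_left, hY.splice_iff_left,
      hO.splice_iff_right]
    tauto
  · rintro ⟨⟨y, r⟩, ⟨y', r'⟩⟩ ⟨⟨-, -, hy, ho⟩, -, hy', ho'⟩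
    refine M.p_splice_mul_p_splice (fun j h1 h2 => ?_) (fun j h1 h2 => ?_)
    · rw [hy j (by omega) h2, hy' j (by omega) h2]
    · rw [ho j h1 h2, ho' j h1 h2]

section Windows

variable {K : ℕ} {y r : Fin K → Bool}

lemma Yeq_iff_and {lo hi : ℕ} (h : lo ≤ hi) (yv : ℕ → Bool) :
    Yeq lo hi yv y r ↔ Yeq lo (hi - 1) yv y r ∧ Yeq hi hi yv y r :=
  ⟨fun H => ⟨fun j h1 h2 => H j h1 (by omega), fun j h1 h2 => H j (by omega) h2⟩,
    fun H j h1 h2 => if hj : j.1 + 1 ≤ hi - 1 then H.1 j h1 hj else H.2 j (by omega) h2⟩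

lemma Oeq_iff_and {lo hi : ℕ} (h : lo ≤ hi) (ov : ℕ → Option Bool) :
    Oeq lo hi ov y r ↔ Oeq lo (hi - 1) ov y r ∧ Oeq hi hi ov y r :=
  ⟨fun H => ⟨fun j h1 h2 => H j h1 (by omega), fun j h1 h2 => H j (by omega) h2⟩,
    fun H j h1 h2 => if hj : j.1 + 1 ≤ hi - 1 then H.1 j h1 hj else H.2 j (by omega) h2⟩

lemma Oeq_of_lt {lo : ℕ} (h : K < lo) (hi : ℕ) (ov : ℕ → Option Bool) : Oeq lo hi ov y r :=
  fun j h1 _ => absurd j.2 (by omega)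

lemma Req_self_iff {k : ℕ} (hk1 : 1 ≤ k) (hk2 : k ≤ K) (rv : ℕ → Bool) :
    Req k k rv y r ↔ r ⟨k - 1, by omega⟩ = rv k := by
  have hk : ∀ j : Fin K, k ≤ j.1 + 1 → j.1 + 1 ≤ k → j = ⟨k - 1, by omega⟩ :=
    fun j h1 h2 => Fin.ext (by simp only; omega)
  refine ⟨fun H => ?_, fun H j h1 h2 => ?_⟩
  · simpa [Nat.sub_add_cancel hk1] using
      H ⟨k - 1, by omega⟩ (by simp only; omega) (by simp only; omega)
  · obtain rfl := hk j h1 h2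
    simpa [Nat.sub_add_cancel hk1] using H

lemma Req_false_iff_not {k : ℕ} (hk1 : 1 ≤ k) (hk2 : k ≤ K) :
    Req k k (fun _ => false) y r ↔ ¬ Req k k (fun _ => true) y r := by
  simp [Req_self_iff hk1 hk2]

end Windows

lemma exists_Yeq_Req_Oeq {K : ℕ} (k lo hi : ℕ) (yv : ℕ → Bool) (ε : Bool)
    (ov : ℕ → Option Bool) :
    ∃ y r : Fin K → Bool,
      Yeq lo k yv y r ∧ Req k k (fun _ => ε) y r ∧ Oeq (k + 1) hi ov y r := by
  refine ⟨fun j => if j.1 + 1 ≤ k then yv (j.1 + 1) else (ov (j.1 + 1)).getD true,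
    fun j => if j.1 + 1 ≤ k then ε else (ov (j.1 + 1)).isSome,
    fun j _ h => if_pos h, fun j _ h => if_pos h, fun j h _ => ?_⟩
  have hj : ¬ j.1 + 1 ≤ k := by omega
  cases hov : ov (j.1 + 1) <;> simp [obs, hj, hov]

lemma add_eq_of_tilt_of_mul_comm {q₁ q₀ n₁ n₀ d₁ d₀ d e c : ℝ} (hn₁ : n₁ ≠ 0) (hd₁ : d₁ ≠ 0)
    (hd₀ : d₀ ≠ 0) (hd : d ≠ 0) (htilt : n₀ / d₀ = n₁ / d₁ * e / c)
    (hswap : q₁ * n₀ = q₀ * n₁) :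
    q₁ + q₀ = q₁ / n₁ * (n₁ / d₁) * (d₁ / d + d₀ / d * e / c) * d := by
  simp only [mul_div_assoc] at htilt ⊢
  generalize e / c = t at *
  have hn₀ : n₀ = n₁ / d₁ * t * d₀ := (div_eq_iff hd₀).1 htilt
  have hq₀ : q₀ = q₁ * n₀ / n₁ := by rw [hswap, mul_div_assoc, div_self hn₁, mul_one]
  rw [hq₀, hn₀]
  field_simp

section RecursionTerms

variable {K : ℕ} (p : (Fin K → Bool) → (Fin K → Bool) → ℝ) (k m : ℕ) (yv : ℕ → Bool)
  (ov : ℕ → Option Bool)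

lemma Pr_Req_Yeq_Oeq_eq_split (ε : Bool) :
    Pr p (fun y r => Req k k (fun _ => ε) y r ∧ Yeq (k - m) k yv y r ∧
        Oeq (k + 1) (k + m) ov y r)
      = Pr p (fun y r => Yeq k k yv y r ∧ Req k k (fun _ => ε) y r ∧
        Yeq (k - m) (k - 1) yv y r ∧ Oeq (k + 1) (k + m) ov y r) :=
  Pr_congr p fun y r => by rw [Yeq_iff_and (Nat.sub_le k m)]; tauto

lemma Pr_Yeq_Oeq_eq_add (hk1 : 1 ≤ k) (hk2 : k ≤ K) :
    Pr p (fun y r => Yeq (k - m) k yv y r ∧ Oeq (k + 1) (k + m + 1) ov y r)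
      = Pr p (fun y r => Oeq (k + m + 1) (k + m + 1) ov y r ∧ Req k k (fun _ => true) y r ∧
          Yeq (k - m) k yv y r ∧ Oeq (k + 1) (k + m) ov y r)
        + Pr p (fun y r => Oeq (k + m + 1) (k + m + 1) ov y r ∧ Req k k (fun _ => false) y r ∧
          Yeq (k - m) k yv y r ∧ Oeq (k + 1) (k + m) ov y r) := by
  have hO (y r : Fin K → Bool) : Oeq (k + 1) (k + m + 1) ov y r ↔
      Oeq (k + 1) (k + m) ov y r ∧ Oeq (k + m + 1) (k + m + 1) ov y r :=
    Oeq_iff_and (by omega) ov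
  rw [Pr_eq_Pr_and_add_Pr_and_not p _ (Req k k fun _ => true)]
  congr 1 <;> refine Pr_congr p fun y r => ?_
  · rw [hO]; tauto
  · rw [hO, Req_false_iff_not hk1 hk2]; tauto

lemma ite_cPr_Oeq_eq_div
    (h : Pr p (fun y r => Req k k (fun _ => true) y r ∧ Yeq (k - m) k yv y r ∧
      Oeq (k + 1) (k + m) ov y r) ≠ 0) :
    (if k ≤ K - m - 1 then
        cPr p (Oeq (k + m + 1) (k + m + 1) ov)
          (fun y r => Req k k (fun _ => true) y r ∧ Yeq (k - m) k yv y r ∧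
            Oeq (k + 1) (k + m) ov y r)
      else 1)
      = Pr p (fun y r => Oeq (k + m + 1) (k + m + 1) ov y r ∧ Req k k (fun _ => true) y r ∧
          Yeq (k - m) k yv y r ∧ Oeq (k + 1) (k + m) ov y r)
        / Pr p (fun y r => Req k k (fun _ => true) y r ∧ Yeq (k - m) k yv y r ∧
          Oeq (k + 1) (k + m) ov y r) := by
  split_ifs with hk
  · rfl
  · rw [eq_comm, div_eq_one_iff_eq h]
    exact Pr_congr p fun y r => and_iff_right (Oeq_of_lt (by omega) _ ov)

end RecursionTerms

theorem statement3_general (K m : ℕ)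
    (M : Markov K m) (α : ℕ → ℝ) (hT : Tilt M.p m α)
    (k : ℕ) (hk1 : 1 ≤ k) (hk2 : k ≤ K)
    (yv : ℕ → Bool) (ov : ℕ → Option Bool) :
    Pr M.p (fun y r => Yeq (k - m) k yv y r ∧ Oeq (k + 1) (k + m + 1) ov y r)
      = (if k ≤ K - m - 1 then
            cPr M.p (Oeq (k + m + 1) (k + m + 1) ov)
              (fun y r => Req k k (fun _ => true) y r ∧ Yeq (k - m) k yv y r ∧
                Oeq (k + 1) (k + m) ov y r)
          else 1)
        * cPr M.p (Yeq k k yv)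
            (fun y r => Req k k (fun _ => true) y r ∧ Yeq (k - m) (k - 1) yv y r ∧
              Oeq (k + 1) (k + m) ov y r)
        * (cPr M.p (Req k k (fun _ => true))
              (fun y r => Yeq (k - m) (k - 1) yv y r ∧ Oeq (k + 1) (k + m) ov y r)
            + cPr M.p (Req k k (fun _ => false))
                (fun y r => Yeq (k - m) (k - 1) yv y r ∧ Oeq (k + 1) (k + m) ov y r)
              * Real.exp (α k * yVal (yv k)) / cfun M.p m (α k) k yv ov)
        * Pr M.p (fun y r => Yeq (k - m) (k - 1) yv y r ∧ Oeq (k + 1) (k + m) ov y r) := by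
  have hpos (ε : Bool) (E : Event K) (hE : ∀ y r, Yeq (k - m) k yv y r →
      Req k k (fun _ => ε) y r → Oeq (k + 1) (k + m) ov y r → E y r) : Pr M.p E ≠ 0 := by
    obtain ⟨y, r, hy, hr, ho⟩ := exists_Yeq_Req_Oeq k (k - m) (k + m) yv ε ov
    exact (Pr_pos M.p_pos ⟨y, r, hE y r hy hr ho⟩).ne'
  have hY (y r : Fin K → Bool) (h : Yeq (k - m) k yv y r) := (Yeq_iff_and (Nat.sub_le k m) yv).1 h
  have hswap := M.Pr_future_mul_Pr_past_comm k yv ov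
    ((dependsOnlyOn_Oeq (k + m + 1) (k + m + 1) ov).mono fun _ hj => by omega)
    ((dependsOnlyOn_Req k k fun _ => true).mono fun _ hj => hj.2)
    ((dependsOnlyOn_Req k k fun _ => false).mono fun _ hj => hj.2)
  simp only [Pr_Req_Yeq_Oeq_eq_split] at hswap
  rw [Pr_Yeq_Oeq_eq_add M.p k m yv ov hk1 hk2,
    ite_cPr_Oeq_eq_div M.p k m yv ov (hpos true _ fun _ _ hy hr ho => ⟨hr, hy, ho⟩),
    Pr_Req_Yeq_Oeq_eq_split]
  exact add_eq_of_tilt_of_mul_comm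
    (hpos true _ fun y r hy hr ho => ⟨(hY y r hy).2, hr, (hY y r hy).1, ho⟩)
    (hpos true _ fun y r hy hr ho => ⟨hr, (hY y r hy).1, ho⟩)
    (hpos false _ fun y r hy hr ho => ⟨hr, (hY y r hy).1, ho⟩)
    (hpos true _ fun y r hy _ ho => ⟨(hY y r hy).1, ho⟩) (hT k hk1 hk2 yv ov) hswap

/-- **Lemma 3, recursive identity.** Under the `m`th-order Markov model together with the
exponential tilting restriction, for every `k = 1, …, K` and all values of the variables,
`f(Ȳ^{m+1}_{k+1}, O̲^{m+1}_k)
  = [f(O_{k+m+1} | Rₖ = 1, Ȳ^{m+1}_{k+1}, O̲ᵐₖ)]^{1(k ≤ K−m−1)}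
    · f(Yₖ | Rₖ = 1, Ȳᵐₖ, O̲ᵐₖ)
    · { P(Rₖ = 1 | Ȳᵐₖ, O̲ᵐₖ) + P(Rₖ = 0 | Ȳᵐₖ, O̲ᵐₖ) · exp(αₖ Yₖ) / cₖ(Ȳᵐₖ, O̲ᵐₖ; αₖ) }
    · f(Ȳᵐₖ, O̲ᵐₖ)`.
The windows `O̲^{m+1}_k = (O_{k+1}, …, O_{min(k+m+1,K)})` and `O̲ᵐₖ = (O_{k+1}, …, O_{min(k+m,K)})`
are truncated at `K` automatically by `Oeq`. -/
theorem statement3 (K m : ℕ) (hm : 1 ≤ m) (hKm : 2 * m + 1 < K)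
    (M : Markov K m) (α : ℕ → ℝ) (hT : Tilt M.p m α)
    (k : ℕ) (hk1 : 1 ≤ k) (hk2 : k ≤ K)
    (yv : ℕ → Bool) (ov : ℕ → Option Bool) :
    Pr M.p (fun y r => Yeq (k - m) k yv y r ∧ Oeq (k + 1) (k + m + 1) ov y r)
      = (if k ≤ K - m - 1 then
            cPr M.p (Oeq (k + m + 1) (k + m + 1) ov)
              (fun y r => Req k k (fun _ => true) y r ∧ Yeq (k - m) k yv y r ∧
                Oeq (k + 1) (k + m) ov y r)
          else 1)
        * cPr M.p (Yeq k k yv)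
            (fun y r => Req k k (fun _ => true) y r ∧ Yeq (k - m) (k - 1) yv y r ∧
              Oeq (k + 1) (k + m) ov y r)
        * (cPr M.p (Req k k (fun _ => true))
              (fun y r => Yeq (k - m) (k - 1) yv y r ∧ Oeq (k + 1) (k + m) ov y r)
            + cPr M.p (Req k k (fun _ => false))
                (fun y r => Yeq (k - m) (k - 1) yv y r ∧ Oeq (k + 1) (k + m) ov y r)
              * Real.exp (α k * yVal (yv k)) / cfun M.p m (α k) k yv ov)
        * Pr M.p (fun y r => Yeq (k - m) (k - 1) yv y r ∧ Oeq (k + 1) (k + m) ov y r) :=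
  statement3_general K m M α hT k hk1 hk2 yv ov

end MRM
end

section
/- (Equivalence of the two exponential-tilting representations.) Let c(w) = E[exp(αY) | R = 1, W = w]. The following two conditions are equivalent: (i) for all w and all y ∈ {0,1}, logit P(R = 0 | W = w, Y = y) = logit P(R = 0 | W = w) − log c(w) + α y; (ii) for all w and all y ∈ {0,1}, f(Y = y | R = 0, W = w) = f(Y = y | R = 1, W = w) · exp(α y) / c(w). -/
/-!
Fix `w` and write `a_y = q y false w`, `b_y = q y true w`, `A = a₀ + a₁`, `B = b₀ + b₁`.
Every quantity in the statement is a ratio of these cell probabilities: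
`logit P(R = 0 | W = w, Y = y) = log (a_y / b_y)`, `logit P(R = 0 | W = w) = log (A / B)`,
`f(y | R = 0, w) = a_y / A` and `f(y | R = 1, w) = b_y / B`. Exponentiating (i) gives
`a_y / b_y = (A / B) · exp (α y) / c w`, which is (ii) after multiplying by `b_y / A`.
-/

open scoped Classical BigOperators

namespace TiltEquiv

variable {W : Type*} [Fintype W]

/-- Probability of an event under a joint pmf `q` of `(Y, R, W)` with `Y, R` binary. -/
noncomputable def Pr (q : Bool → Bool → W → ℝ) (E : Bool → Bool → W → Prop) : ℝ :=
  ∑ y : Bool, ∑ r : Bool, ∑ w : W, if E y r w then q y r w else 0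

/-- Conditional probability `P(A | C)`. -/
noncomputable def cPr (q : Bool → Bool → W → ℝ) (A C : Bool → Bool → W → Prop) : ℝ :=
  Pr q (fun y r w => A y r w ∧ C y r w) / Pr q C

/-- Real value of a binary outcome. -/
def yVal (v : Bool) : ℝ := if v then 1 else 0

/-- `logit u = log (u / (1 − u))`. -/
noncomputable def logit (u : ℝ) : ℝ := Real.log (u / (1 - u))

lemma logit_div_add {a b : ℝ} (ha : 0 < a) (hb : 0 < b) :
    logit (a / (a + b)) = Real.log (a / b) := by
  have hab : a + b ≠ 0 := by positivity
  have hcompl : 1 - a / (a + b) = b / (a + b) := by field_simp; ring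
  rw [logit, hcompl, div_div_div_cancel_right₀ hab]

lemma logit_tilt_iff {a b A B c : ℝ} (ha : 0 < a) (hb : 0 < b) (hA : 0 < A) (hB : 0 < B)
    (hc : 0 < c) (t : ℝ) :
    logit (a / (a + b)) = logit (A / (A + B)) - Real.log c + t ↔
      a / A = b / B * Real.exp t / c := by
  have hrhs : Real.log (A / B) - Real.log c + t = Real.log (A / B * Real.exp t / c) := by
    rw [Real.log_div (by positivity) hc.ne', Real.log_mul (by positivity) (Real.exp_pos t).ne',
      Real.log_exp]
    ring
  rw [logit_div_add ha hb, logit_div_add hA hB, hrhs,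
    Real.log_injOn_pos.eq_iff (div_pos ha hb) (Set.mem_Ioi.mpr (by positivity))]
  constructor <;> intro h <;> field_simp at h ⊢ <;> linarith

variable (q : Bool → Bool → W → ℝ) (w : W)

lemma cPr_R_false_given_Y_W (v : Bool) :
    cPr q (fun _ r _ => r = false) (fun y _ w' => y = v ∧ w' = w)
      = q v false w / (q v false w + q v true w) := by
  cases v <;> simp [cPr, Pr, Finset.sum_ite_eq'] <;> ring

lemma cPr_R_false_given_W :
    cPr q (fun _ r _ => r = false) (fun _ _ w' => w' = w)
      = (∑ y, q y false w) / ((∑ y, q y false w) + ∑ y, q y true w) := by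
  simp [cPr, Pr, Finset.sum_ite_eq']
  ring

lemma cPr_Y_given_R_W (v r : Bool) :
    cPr q (fun y _ _ => y = v) (fun _ r' w' => r' = r ∧ w' = w)
      = q v r w / ∑ y, q y r w := by
  cases v <;> cases r <;> simp [cPr, Pr, Finset.sum_ite_eq']

theorem statement5_general (q : Bool → Bool → W → ℝ) (hq : ∀ y r w, 0 < q y r w)
    (α : ℝ) (c : W → ℝ)
    (hc : ∀ w : W, c w
        = ∑ v : Bool, Real.exp (α * yVal v) *
            cPr q (fun y _ _ => y = v) (fun _ r w' => r = true ∧ w' = w)) :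
    (∀ (w : W) (v : Bool),
        logit (cPr q (fun _ r _ => r = false) (fun y _ w' => y = v ∧ w' = w))
          = logit (cPr q (fun _ r _ => r = false) (fun _ _ w' => w' = w))
              - Real.log (c w) + α * yVal v)
      ↔
    (∀ (w : W) (v : Bool),
        cPr q (fun y _ _ => y = v) (fun _ r w' => r = false ∧ w' = w)
          = cPr q (fun y _ _ => y = v) (fun _ r w' => r = true ∧ w' = w)
              * Real.exp (α * yVal v) / c w) := by
  refine forall_congr' fun w => forall_congr' fun v => ?_
  have hmarg : ∀ r, 0 < ∑ y, q y r w := fun r => by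
    rw [Fintype.sum_bool]
    exact add_pos (hq true r w) (hq false r w)
  have hcw : 0 < c w := by
    rw [hc w, Fintype.sum_bool]
    simp only [cPr_Y_given_R_W]
    have := hmarg true
    have := hq false true w
    have := hq true true w
    positivity
  rw [cPr_R_false_given_Y_W, cPr_R_false_given_W, cPr_Y_given_R_W, cPr_Y_given_R_W]
  exact logit_tilt_iff (hq v false w) (hq v true w) (hmarg false) (hmarg true) hcw _

/-- Equivalence of the two exponential-tilting representations.
Let `c w = E[exp(α Y) | R = 1, W = w]`.  The following are equivalent:
(i) for all `w` and `y ∈ {0,1}`,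
    `logit P(R = 0 | W = w, Y = y) = logit P(R = 0 | W = w) − log (c w) + α y`;
(ii) for all `w` and `y ∈ {0,1}`,
    `f(Y = y | R = 0, W = w) = f(Y = y | R = 1, W = w) · exp(α y) / c w`. -/
theorem statement5 (q : Bool → Bool → W → ℝ) (hq : ∀ y r w, 0 < q y r w)
    (hsum : ∑ y : Bool, ∑ r : Bool, ∑ w : W, q y r w = 1) (α : ℝ) (c : W → ℝ)
    (hc : ∀ w : W, c w
        = ∑ v : Bool, Real.exp (α * yVal v) *
            cPr q (fun y _ _ => y = v) (fun _ r w' => r = true ∧ w' = w)) :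
    (∀ (w : W) (v : Bool),
        logit (cPr q (fun _ r _ => r = false) (fun y _ w' => y = v ∧ w' = w))
          = logit (cPr q (fun _ r _ => r = false) (fun _ _ w' => w' = w))
              - Real.log (c w) + α * yVal v)
      ↔
    (∀ (w : W) (v : Bool),
        cPr q (fun y _ _ => y = v) (fun _ r w' => r = false ∧ w' = w)
          = cPr q (fun y _ _ => y = v) (fun _ r w' => r = true ∧ w' = w)
              * Real.exp (α * yVal v) / c w) :=
  statement5_general q hq α c hc

end TiltEquiv
end

section
/- (mth-order Markov property of the outcome marginal.) Under the mth-order Markov model, the marginal law of the outcomes factorizes through the local factors: for every y ∈ {0,1}^K, P(Y₁ = y₁, …, Y_K = y_K) = Σ_{r ∈ {0,1}^K} p(y,r) = ∏_{k=1}^K aₖ(yₖ | ȳᵐₖ); consequently, for every k, f(Yₖ = yₖ | Y₁ = y₁, …, Y_{k−1} = y_{k−1}) = f(Yₖ = yₖ | Y_{max(1,k−m)} = y_{max(1,k−m)}, …, Y_{k−1} = y_{k−1}) = aₖ(yₖ | ȳᵐₖ). -/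
open scoped Classical BigOperators

namespace MRM

/-!
Each `bₖ(· | y, ·)` sees the responses only from `k` on and is a pmf in `rₖ`, so summing the
responses out from `r₁` upwards leaves `∏ₖ aₖ(y)`. The `aₖ` are a chain of conditional pmfs in
the forward order: summing out the outcomes after `k` shows that, given any event in the earlier
outcomes, `Yₖ` has conditional law `aₖ`, which only sees the last `m` of them.
-/

section CausalKernel

open Finset

variable {ι β : Type*} [Fintype ι] [LinearOrder ι] [Fintype β] [DecidableEq β]

structure IsCausalKernel (g : ι → (ι → β) → ℝ) : Prop where
  eq_of_agree : ∀ i x x', (∀ j ≤ i, x j = x' j) → g i x = g i x'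
  sum_update : ∀ i x, ∑ v, g i (Function.update x i v) = 1

def agreeOff (s : Finset ι) (x₀ : ι → β) : Finset (ι → β) :=
  univ.filter fun x => ∀ j ∉ s, x j = x₀ j

@[simp]
theorem mem_agreeOff {s : Finset ι} {x₀ x : ι → β} :
    x ∈ agreeOff s x₀ ↔ ∀ j ∉ s, x j = x₀ j := by
  simp [agreeOff]

theorem agreeOff_empty (x₀ : ι → β) : agreeOff ∅ x₀ = {x₀} := by
  ext x
  simp [funext_iff]

theorem agreeOff_univ (x₀ : ι → β) : agreeOff univ x₀ = univ := by
  ext x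
  simp

theorem sum_agreeOff_insert {γ : Type*} [AddCommMonoid γ] {s : Finset ι} {a : ι} (ha : a ∉ s)
    (x₀ : ι → β) (f : (ι → β) → γ) :
    ∑ x ∈ agreeOff (insert a s) x₀, f x = ∑ x ∈ agreeOff s x₀, ∑ v, f (Function.update x a v) := by
  rw [← sum_product' (agreeOff s x₀) univ fun x v => f (Function.update x a v)]
  symm
  refine sum_nbij' (fun p : (ι → β) × β => Function.update p.1 a p.2)
    (fun x : ι → β => (Function.update x a (x₀ a), x a)) ?_ ?_ ?_ ?_ fun _ _ => rfl
  · rintro ⟨x, v⟩ hx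
    simp only [mem_agreeOff, mem_insert, not_or, mem_product, mem_univ, and_true] at hx ⊢
    rintro j ⟨hja, hj⟩
    rw [Function.update_of_ne hja]; exact hx j hj
  · intro x hx
    simp only [mem_agreeOff, mem_insert, not_or, mem_product, mem_univ, and_true] at hx ⊢
    intro j hj
    by_cases hja : j = a
    · subst hja; simp
    · rw [Function.update_of_ne hja]; exact hx j ⟨hja, hj⟩
  · rintro ⟨x, v⟩ hx
    simp only [mem_product, mem_agreeOff, mem_univ, and_true] at hx
    simp [← hx a ha]
  · intro x _
    simp

namespace IsCausalKernel

variable {g : ι → (ι → β) → ℝ}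

/-- Summing out the coordinates of `s`, from the largest one down, removes their factors. -/
theorem sum_agreeOff_mul_prod (hg : IsCausalKernel g) {s t : Finset ι} (hst : s ⊆ t)
    (x₀ : ι → β) {Φ : (ι → β) → ℝ} (hΦ : ∀ x x', (∀ j ∉ s, x j = x' j) → Φ x = Φ x') :
    ∑ x ∈ agreeOff t x₀, Φ x * ∏ i ∈ s, g i x = ∑ x ∈ agreeOff (t \ s) x₀, Φ x := by
  induction s using Finset.induction_on_max generalizing t with
  | empty => simp
  | insert a s hlt ih =>
    have has : a ∉ s := fun h => lt_irrefl a (hlt a h)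
    have step : ∀ x, ∑ v, Φ (Function.update x a v) * ∏ i ∈ insert a s, g i (Function.update x a v)
        = Φ x * ∏ i ∈ s, g i x := by
      intro x
      have hΦa : ∀ v, Φ (Function.update x a v) = Φ x := fun v =>
        hΦ _ _ fun j hj => Function.update_of_ne (by rintro rfl; exact hj (mem_insert_self _ s)) _ _
      have hga : ∀ v, ∀ i ∈ s, g i (Function.update x a v) = g i x := fun v i hi =>
        hg.eq_of_agree i _ _ fun j hj => Function.update_of_ne (hj.trans_lt (hlt i hi)).ne _ _
      simp_rw [prod_insert has, hΦa]
      rw [sum_congr rfl fun v _ => by rw [prod_congr rfl (hga v)], ← mul_sum, ← sum_mul,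
        hg.sum_update, one_mul]
    have hat : a ∈ t := hst (mem_insert_self a s)
    have hsub : s ⊆ t.erase a := fun i hi =>
      mem_erase.2 ⟨(hlt i hi).ne, hst (mem_insert_of_mem hi)⟩
    rw [← insert_erase hat, sum_agreeOff_insert (notMem_erase a t),
      sum_congr rfl fun x _ => step x, ih hsub fun x x' h => hΦ x x' fun j hj => h j fun hjs =>
        hj (mem_insert_of_mem hjs), erase_sdiff_comm, sdiff_insert, insert_erase hat]

theorem sum_prod_eq_one [Nonempty β] (hg : IsCausalKernel g) : ∑ x, ∏ i, g i x = 1 := by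
  inhabit β
  simpa [agreeOff_univ, agreeOff_empty] using
    hg.sum_agreeOff_mul_prod (subset_refl univ) default (Φ := fun _ => 1) fun _ _ _ => rfl

theorem sum_mul_prod_eq_sum_agreeOff (hg : IsCausalKernel g) (k : ι) (x₀ : ι → β)
    {Θ : (ι → β) → ℝ} (hΘ : ∀ x x', (∀ j ≤ k, x j = x' j) → Θ x = Θ x') :
    ∑ x, Θ x * ∏ i, g i x
      = ∑ x ∈ agreeOff (univ.filter (· ≤ k)) x₀, Θ x * ∏ i ∈ univ.filter (· ≤ k), g i x := by
  have hfilter : univ \ univ.filter (k < ·) = univ.filter (· ≤ k) := by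
    ext i
    simp
  simp_rw [← prod_filter_not_mul_prod_filter univ (fun i => k < i), ← mul_assoc, not_lt]
  rw [← agreeOff_univ x₀, hg.sum_agreeOff_mul_prod (subset_univ _) x₀, hfilter]
  intro x x' h
  have h' : ∀ j ≤ k, x j = x' j := fun j hj => h j (by simpa using hj)
  rw [hΘ x x' h', prod_congr rfl fun i hi =>
    hg.eq_of_agree i x x' fun j hj => h' j (hj.trans (mem_filter.1 hi).2)]

/-- `g k` is the conditional law of the `k`-th coordinate given the earlier ones. -/
theorem sum_mul_ite_eq_sum_mul_update [Nonempty β] (hg : IsCausalKernel g) (k : ι)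
    {Ψ : (ι → β) → ℝ} (hΨ : ∀ x x', (∀ j < k, x j = x' j) → Ψ x = Ψ x') (v : β) :
    ∑ x, Ψ x * (if x k = v then 1 else 0) * ∏ i, g i x
      = ∑ x, Ψ x * g k (Function.update x k v) * ∏ i, g i x := by
  inhabit β
  have hle : univ.filter (· ≤ k) = insert k (univ.filter (· < k)) := by
    ext i
    simp [le_iff_lt_or_eq, or_comm]
  have hsplit : ∀ x w, ∏ i ∈ insert k (univ.filter (· < k)), g i (Function.update x k w)
      = g k (Function.update x k w) * ∏ i ∈ univ.filter (· < k), g i x := by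
    intro x w
    rw [prod_insert (by simp)]
    exact congrArg _ <| prod_congr rfl fun i hi => hg.eq_of_agree i _ _ fun j hj =>
      Function.update_of_ne (hj.trans_lt (mem_filter.1 hi).2).ne _ _
  have hΨk : ∀ x w, Ψ (Function.update x k w) = Ψ x := fun x w =>
    hΨ _ _ fun j hj => Function.update_of_ne hj.ne _ _
  rw [hg.sum_mul_prod_eq_sum_agreeOff k default, hg.sum_mul_prod_eq_sum_agreeOff k default, hle,
    sum_agreeOff_insert (by simp), sum_agreeOff_insert (by simp)]
  · refine sum_congr rfl fun x _ => ?_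
    simp only [hsplit, hΨk, Function.update_self, Function.update_idem]
    rw [← mul_sum, ← sum_mul, hg.sum_update, one_mul]
    simp only [mul_ite, ite_mul, mul_one, mul_zero, zero_mul, sum_ite_eq', mem_univ, if_true]
    exact (mul_assoc _ _ _).symm
  · intro x x' h
    rw [hΨ x x' fun j hj => h j hj.le]
    congr 1
    refine hg.eq_of_agree k _ _ fun j hj => ?_
    simp only [Function.update_apply]
    split_ifs
    · rfl
    · exact h j hj
  · intro x x' h
    rw [hΨ x x' fun j hj => h j hj.le, h k le_rfl]

end IsCausalKernel

end CausalKernel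

theorem Yeq_single_iff {K : ℕ} (k : Fin K) (yv : ℕ → Bool) (y r : Fin K → Bool) :
    Yeq (k.1 + 1) (k.1 + 1) yv y r ↔ y k = yv (k.1 + 1) := by
  refine ⟨fun h => h k le_rfl le_rfl, fun h j h₁ h₂ => ?_⟩
  obtain rfl : j = k := Fin.ext (by omega)
  exact h

namespace Markov

open Finset

variable {K m : ℕ} (M : Markov K m)

theorem isCausalKernel_a : IsCausalKernel M.a :=
  ⟨fun k y y' h => M.a_local k y y' fun j _ hj => h j hj, M.a_pmf⟩

/-- `bₖ` looks at the responses from `k` on, so it is a causal kernel for the reversed order. -/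
theorem isCausalKernel_b (y : Fin K → Bool) :
    IsCausalKernel (ι := (Fin K)ᵒᵈ) fun k r => M.b (OrderDual.ofDual k) y r := by
  refine ⟨fun k r r' h => M.b_local k y r y r' (h k le_rfl) (fun _ _ _ => rfl) fun j hj _ => ?_,
    fun k r => M.b_pmf k y r⟩
  simp only [obs, h j hj.le]

theorem sum_p_eq_prod_a (y : Fin K → Bool) : ∑ r, M.p y r = ∏ k, M.a k y := by
  simp_rw [M.factor, prod_mul_distrib, ← mul_sum]
  rw [show ∑ r, ∏ k, M.b k y r = 1 from (M.isCausalKernel_b y).sum_prod_eq_one, mul_one]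

theorem Pr_eq_sum (E : (Fin K → Bool) → Prop) :
    Pr M.p (fun y _ => E y) = ∑ y, (if E y then 1 else 0) * ∏ k, M.a k y := by
  refine sum_congr rfl fun y _ => ?_
  split_ifs <;> simp [M.sum_p_eq_prod_a, *]

theorem cPr_Yeq_eq_a (yv : ℕ → Bool) (k : Fin K) {lo : ℕ} (hlo : lo ≤ max 1 (k.1 + 1 - m)) :
    cPr M.p (Yeq (k.1 + 1) (k.1 + 1) yv) (Yeq lo k.1 yv) = M.a k (fun j => yv (j.1 + 1)) := by
  set ŷ : Fin K → Bool := fun j => yv (j.1 + 1)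
  set Ψ : (Fin K → Bool) → ℝ := fun y => if Yeq lo k.1 yv y y then 1 else 0
  have hΨ : ∀ y y', (∀ j < k, y j = y' j) → Ψ y = Ψ y' := fun y y' h => by
    refine if_congr (forall_congr' fun j => imp_congr_right fun _ => imp_congr_right fun hj => ?_)
      rfl rfl
    rw [h j (by omega)]
  have hnum : Pr M.p (fun y r => Yeq (k.1 + 1) (k.1 + 1) yv y r ∧ Yeq lo k.1 yv y r)
      = ∑ y, Ψ y * (if y k = ŷ k then 1 else 0) * ∏ i, M.a i y := by
    refine (M.Pr_eq_sum fun y => Yeq (k.1 + 1) (k.1 + 1) yv y y ∧ Yeq lo k.1 yv y y).trans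
      (sum_congr rfl fun y _ => ?_)
    simp only [Yeq_single_iff, Ψ, ite_zero_mul_ite_zero, mul_one, and_comm]
    rfl
  have hden : Pr M.p (Yeq lo k.1 yv) = ∑ y, Ψ y * ∏ i, M.a i y :=
    M.Pr_eq_sum fun y => Yeq lo k.1 yv y y
  have hwindow : ∀ y, Ψ y * M.a k (Function.update y k (ŷ k)) = Ψ y * M.a k ŷ := by
    intro y
    by_cases hy : Yeq lo k.1 yv y y
    · refine congrArg _ (M.a_local k _ _ fun j h₁ h₂ => ?_)
      rcases eq_or_ne j k with rfl | hjk
      · exact Function.update_self ..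
      · rw [Function.update_of_ne hjk]
        exact hy j (by omega) (by have := Fin.val_ne_of_ne hjk; omega)
    · simp [Ψ, hy]
  have hpos : 0 < Pr M.p (Yeq lo k.1 yv) := by
    have hΨ_nonneg : ∀ y, 0 ≤ Ψ y := fun y => by
      simp only [Ψ]
      split_ifs <;> norm_num
    rw [hden]
    refine sum_pos' (fun y _ => mul_nonneg (hΨ_nonneg y) (prod_pos fun i _ => M.a_pos i y).le)
      ⟨ŷ, mem_univ _, mul_pos ?_ (prod_pos fun i _ => M.a_pos i ŷ)⟩
    simp [Ψ, Yeq, ŷ]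
  rw [cPr, hnum, M.isCausalKernel_a.sum_mul_ite_eq_sum_mul_update k hΨ]
  simp_rw [hwindow, mul_comm _ (M.a k ŷ), mul_assoc, ← mul_sum, ← hden]
  exact mul_div_cancel_right₀ _ hpos.ne'

end Markov

theorem statement8_general (K m : ℕ) (M : Markov K m) (yv : ℕ → Bool) :
    (Pr M.p (fun y _ => ∀ j : Fin K, y j = yv (j.1 + 1))
        = ∑ r : Fin K → Bool, M.p (fun j => yv (j.1 + 1)) r)
      ∧
    (Pr M.p (fun y _ => ∀ j : Fin K, y j = yv (j.1 + 1))
        = ∏ k : Fin K, M.a k (fun j => yv (j.1 + 1)))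
      ∧
    (∀ k : Fin K,
      cPr M.p (Yeq (k.1 + 1) (k.1 + 1) yv) (Yeq 1 k.1 yv)
        = cPr M.p (Yeq (k.1 + 1) (k.1 + 1) yv) (Yeq (k.1 + 1 - m) k.1 yv))
      ∧
    (∀ k : Fin K,
      cPr M.p (Yeq (k.1 + 1) (k.1 + 1) yv) (Yeq (k.1 + 1 - m) k.1 yv)
        = M.a k (fun j => yv (j.1 + 1))) := by
  have hpoint : Pr M.p (fun y _ => ∀ j : Fin K, y j = yv (j.1 + 1))
      = ∏ k : Fin K, M.a k (fun j => yv (j.1 + 1)) := by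
    simp [M.Pr_eq_sum, ← funext_iff]
  refine ⟨hpoint.trans (M.sum_p_eq_prod_a _).symm, hpoint, fun k => ?_,
    fun k => M.cPr_Yeq_eq_a yv k (le_max_right _ _)⟩
  rw [M.cPr_Yeq_eq_a yv k (le_max_left _ _), M.cPr_Yeq_eq_a yv k (le_max_right _ _)]

/-- `m`th-order Markov property of the outcome marginal.  Under the
`m`th-order Markov model, the marginal law of the outcomes factorizes through the local
factors: for every `y ∈ {0,1}^K`,
`P(Y₁ = y₁, …, Y_K = y_K) = Σ_r p(y, r) = ∏ₖ aₖ(yₖ | ȳᵐₖ)`;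
consequently, for every `k`,
`f(Yₖ = yₖ | Y₁ = y₁, …, Y_{k−1} = y_{k−1})
  = f(Yₖ = yₖ | Y_{max(1,k−m)} = y_{max(1,k−m)}, …, Y_{k−1} = y_{k−1}) = aₖ(yₖ | ȳᵐₖ)`.
The 1-based paper index of `k : Fin K` is `k.1 + 1`. -/
theorem statement8 (K m : ℕ) (hm : 1 ≤ m) (hKm : 2 * m + 1 < K)
    (M : Markov K m) (yv : ℕ → Bool) :
    (Pr M.p (fun y _ => ∀ j : Fin K, y j = yv (j.1 + 1))
        = ∑ r : Fin K → Bool, M.p (fun j => yv (j.1 + 1)) r)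
      ∧
    (Pr M.p (fun y _ => ∀ j : Fin K, y j = yv (j.1 + 1))
        = ∏ k : Fin K, M.a k (fun j => yv (j.1 + 1)))
      ∧
    (∀ k : Fin K,
      cPr M.p (Yeq (k.1 + 1) (k.1 + 1) yv) (Yeq 1 k.1 yv)
        = cPr M.p (Yeq (k.1 + 1) (k.1 + 1) yv) (Yeq (k.1 + 1 - m) k.1 yv))
      ∧
    (∀ k : Fin K,
      cPr M.p (Yeq (k.1 + 1) (k.1 + 1) yv) (Yeq (k.1 + 1 - m) k.1 yv)
        = M.a k (fun j => yv (j.1 + 1))) :=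
  statement8_general K m M yv

end MRM
end
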